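/- arXiv:2508.04751 — 6 statements merged into one kernel-verified Lean document; each statement's English description precedes it below -/
import Mathlib

section
/- For every natural number n and all real numbers x, s with x ≥ 0 and x + 4s ≥ 0, one has L (2n) (Real.sqrt x) s - 2·s^n = x·(F n (Real.sqrt (x + 4s)) (-s))^2. -/
/-- Bivariate Fibonacci polynomials. -/
def F : ℕ → ℝ → ℝ → ℝ
  | 0, _, _ => 0
  | 1, _, _ => 1
  | n + 2, x, s => x * F (n + 1) x s + s * F n x s

/-- Bivariate Lucas polynomials. -/
def L : ℕ → ℝ → ℝ → ℝ
  | 0, _, _ => 2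
  | 1, x, _ => x
  | n + 2, x, s => x * L (n + 1) x s + s * L n x s

lemma L_rec6 (y s : ℝ) (n : ℕ) :
    L (n+6) y s = (y^2+3*s) * L (n+4) y s - s*(y^2+3*s) * L (n+2) y s + s^3 * L n y s := by
  simp [L]; ring

lemma F_sq_rec (z t : ℝ) (n : ℕ) :
    (F (n+3) z t)^2 = (z^2+t) * (F (n+2) z t)^2 + t*(z^2+t) * (F (n+1) z t)^2
      - t^3 * (F n z t)^2 := by
  simp [F]; ring

lemma key (y z s : ℝ) (hz : z^2 = y^2 + 4*s) :
    ∀ n, L (2*n) y s - 2*s^n = y^2 * (F n z (-s))^2 := by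
  have main : ∀ n, (L (2*n) y s - 2*s^n = y^2 * (F n z (-s))^2) ∧
      (L (2*(n+1)) y s - 2*s^(n+1) = y^2 * (F (n+1) z (-s))^2) ∧
      (L (2*(n+2)) y s - 2*s^(n+2) = y^2 * (F (n+2) z (-s))^2) := by
    intro n
    induction n with
    | zero =>
      refine ⟨by norm_num [L, F], by norm_num [L, F]; ring, ?_⟩
      norm_num [L, F]
      linear_combination -y^2 * hz
    | succ k ih =>
      obtain ⟨ih0, ih1, ih2⟩ := ih
      refine ⟨ih1, ih2, ?_⟩
      have e1 := L_rec6 y s (2*k)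
      have e2 := F_sq_rec z (-s) k
      rw [hz] at e2
      simp only [show 2*(k+1+2) = 2*k+6 from by ring, show 2*(k+2) = 2*k+4 from by ring,
        show 2*(k+1) = 2*k+2 from by ring, show k+1+2 = k+3 from rfl] at *
      linear_combination e1 + (y^2+3*s)*ih2 - s*(y^2+3*s)*ih1 + s^3*ih0 - y^2*e2
  exact fun n => (main n).1

theorem stmt_1 (n : ℕ) (x s : ℝ) (hx : x ≥ 0) (hxs : x + 4 * s ≥ 0) :
    L (2 * n) (Real.sqrt x) s - 2 * s ^ n =
      x * (F n (Real.sqrt (x + 4 * s)) (-s)) ^ 2 := by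
  have hy : Real.sqrt x ^ 2 = x := Real.sq_sqrt hx
  have hz : Real.sqrt (x + 4*s) ^ 2 = Real.sqrt x ^ 2 + 4*s := by
    rw [Real.sq_sqrt hxs, hy]
  have h := key (Real.sqrt x) (Real.sqrt (x + 4*s)) s hz n
  rw [hy] at h
  exact h
end

section
/- For every natural number n and all real numbers x, s with x ≥ 0, one has L (4n) (Real.sqrt x) s - 2·s^(2n) = (x + 4s)·(F (2n) (Real.sqrt x) s)^2. -/
lemma Fadd (x s : ℝ) (n : ℕ) : ∀ m : ℕ,
    F (m + n + 1) x s = F (m + 1) x s * F (n + 1) x s + s * F m x s * F n x s := by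
  intro m
  induction m using Nat.twoStepInduction with
  | zero => simp [F]
  | one =>
    rw [show 1 + n + 1 = n + 2 by omega, show 1 + 1 = 2 by omega]
    show x * F (n + 1) x s + s * F n x s = F 2 x s * F (n + 1) x s + s * F 1 x s * F n x s
    show _ = (x * 1 + s * 0) * F (n + 1) x s + s * 1 * F n x s
    ring
  | more m ih1 ih2 =>
    have : m + 2 + n + 1 = (m + n + 1) + 2 := by ring
    rw [this]
    show x * F (m + n + 1 + 1) x s + s * F (m + n + 1) x s = _
    have : m + n + 1 + 1 = (m + 1) + n + 1 := by ring
    rw [this, ih2, ih1]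
    have e2 : F (m + 2) x s = x * F (m + 1) x s + s * F m x s := rfl
    have e3 : F (m + 2 + 1) x s = x * F (m + 2) x s + s * F (m + 1) x s := rfl
    rw [e3, e2]
    ring

lemma Lform (x s : ℝ) : ∀ m : ℕ, L (m + 1) x s = F (m + 2) x s + s * F m x s := by
  intro m
  induction m using Nat.twoStepInduction with
  | zero => simp [F, L]
  | one => simp [F, L]; ring
  | more m ih1 ih2 =>
    show x * L (m + 2) x s + s * L (m + 1) x s = x * F (m + 3) x s + s * F (m + 2) x s + s * F (m + 2) x s
    rw [show L (m + 2) x s = L ((m+1) + 1) x s from rfl, ih2, ih1]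
    show _ = x * F (m + 3) x s + s * (x * F (m + 1) x s + s * F m x s) + s * _
    ring

lemma FCassini (x s : ℝ) : ∀ m : ℕ,
    F (m + 1) x s * F (m + 1) x s - F (m + 2) x s * F m x s = (-s) ^ m := by
  intro m
  induction m with
  | zero => simp [F]
  | succ m ih =>
    show F (m + 2) x s * F (m + 2) x s - F (m + 3) x s * F (m + 1) x s = (-s) ^ (m + 1)
    have h3 : F (m + 3) x s = x * F (m + 2) x s + s * F (m + 1) x s := rfl
    have h2 : F (m + 2) x s = x * F (m + 1) x s + s * F m x s := rfl
    rw [pow_succ, ← ih, h3, h2]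
    ring

theorem stmt_3 (n : ℕ) (x s : ℝ) (hx : x ≥ 0) :
    L (4 * n) (Real.sqrt x) s - 2 * s ^ (2 * n) =
      (x + 4 * s) * (F (2 * n) (Real.sqrt x) s) ^ 2 := by
  set y := Real.sqrt x with hy
  have hyx : y ^ 2 = x := Real.sq_sqrt hx
  cases n with
  | zero => simp [L, F]
  | succ k =>
    set a := F (2 * k + 1) y s with ha
    set b := F (2 * k + 2) y s with hb
    set c := F (2 * k + 3) y s with hc
    have hcb : c = y * b + s * a := rfl
    have h45 : F (4 * k + 5) y s = c * c + s * b * b := by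
      have := Fadd y s (2 * k + 2) (2 * k + 2)
      rw [show 2*k+2 + (2*k+2) + 1 = 4*k+5 by ring] at this
      simpa using this
    have h43 : F (4 * k + 3) y s = b * b + s * a * a := by
      have := Fadd y s (2 * k + 1) (2 * k + 1)
      rw [show 2*k+1 + (2*k+1) + 1 = 4*k+3 by ring] at this
      simpa using this
    have hL : L (4 * (k + 1)) y s = F (4 * k + 5) y s + s * F (4 * k + 3) y s := by
      have := Lform y s (4 * k + 3)
      rw [show 4*k+3+1 = 4*(k+1) by ring, show 4*k+3+2 = 4*k+5 by ring] at this
      exact this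
    have hcass : b * b - c * a = (-s) ^ (2 * k + 1) := by
      have := FCassini y s (2 * k + 1)
      rw [show 2*k+1+1 = 2*k+2 by ring, show 2*k+1+2 = 2*k+3 by ring] at this
      exact this
    have hspow : s ^ (2 * (k + 1)) = s * (c * a - b * b) := by
      have h1 : (-s) ^ (2 * k + 1) = -(s ^ (2 * k + 1)) :=
        Odd.neg_pow ⟨k, by ring⟩ s
      have : s ^ (2 * k + 1) = c * a - b * b := by
        have := hcass
        rw [h1] at this
        linarith
      rw [show 2 * (k + 1) = (2 * k + 1) + 1 by ring, pow_succ, this]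
      ring
    rw [show 2 * (k + 1) = 2 * k + 2 by ring] at *
    rw [hL, h45, h43, ← hb, hspow, ← hyx, hcb]
    ring
end

section
/- For all natural numbers n, k with 1 ≤ k ≤ n, one has (2k)! · (Nat.choose (n+k) (2k) + Nat.choose (n+k-1) (2k)) = 2 · n^2 · ∏_{j=1}^{k-1} (n^2 - j^2). -/
lemma aux_desc (n : ℕ) : ∀ k, 1 ≤ k → k ≤ n →
    Nat.descFactorial (n + k - 1) (2 * k - 1) =
      n * ∏ j ∈ Finset.Icc 1 (k - 1), (n ^ 2 - j ^ 2) := by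
  intro k
  induction k with
  | zero => intro h; omega
  | succ k ih =>
    intro _ hkn
    rcases Nat.eq_zero_or_pos k with rfl | hk
    · simp [Nat.descFactorial]
    · have hkn' : k ≤ n := by omega
      have h1 : n + (k + 1) - 1 = (n + k - 1) + 1 := by omega
      have h2 : 2 * (k + 1) - 1 = (2 * k - 1) + 1 + 1 := by omega
      rw [h1, h2, Nat.succ_descFactorial_succ, Nat.descFactorial_succ, ih hk hkn']
      have h3 : n + k - 1 - (2 * k - 1) = n - k := by omega
      have h4 : (n + k - 1) + 1 = n + k := by omega
      have h5 : k + 1 - 1 = k := rfl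
      rw [h3, h4, h5]
      have h6 : ∏ j ∈ Finset.Icc 1 k, (n ^ 2 - j ^ 2) =
          (∏ j ∈ Finset.Icc 1 (k - 1), (n ^ 2 - j ^ 2)) * (n ^ 2 - k ^ 2) := by
        have : k = (k - 1) + 1 := by omega
        rw [this, Finset.prod_Icc_succ_top (by omega)]
        simp
      rw [h6]
      have h7 : n ^ 2 - k ^ 2 = (n + k) * (n - k) := by
        have := Nat.sq_sub_sq n k
        omega
      rw [h7]; ring

theorem stmt_10 (n k : ℕ) (hk : 1 ≤ k) (hkn : k ≤ n) :
    Nat.factorial (2 * k) *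
        (Nat.choose (n + k) (2 * k) + Nat.choose (n + k - 1) (2 * k)) =
      2 * n ^ 2 * ∏ j ∈ Finset.Icc 1 (k - 1), (n ^ 2 - j ^ 2) := by
  have e : Nat.factorial (2 * k) *
        (Nat.choose (n + k) (2 * k) + Nat.choose (n + k - 1) (2 * k)) =
      Nat.descFactorial (n + k) (2 * k) + Nat.descFactorial (n + k - 1) (2 * k) := by
    rw [Nat.descFactorial_eq_factorial_mul_choose, Nat.descFactorial_eq_factorial_mul_choose]
    ring
  rw [e]
  have h1 : n + k = (n + k - 1) + 1 := by omega
  have h2 : 2 * k = (2 * k - 1) + 1 := by omega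
  rw [h1, h2, Nat.succ_descFactorial_succ, Nat.descFactorial_succ, Nat.add_sub_cancel]
  rw [aux_desc n k hk hkn]
  have h3 : n + k - 1 - (2 * k - 1) = n - k := by omega
  rw [h3]
  have : (n + k - 1) + 1 = n + k := by omega
  rw [this]
  have : (n + k) + (n - k) = 2 * n := by omega
  rw [← add_mul, this]; ring
end

section
/- For every natural number n ≥ 1 and every real number θ, one has ∑_{k=1}^{n} (-1)^(k-1) · (Nat.choose (n+k) (2k) + Nat.choose (n+k-1) (2k)) · (4·(Real.sin θ)^2)^k = 4·(Real.sin (n·θ))^2. -/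
open Finset

noncomputable def ff (x : ℝ) (m k : ℕ) : ℝ :=
  (-1 : ℝ) ^ (k - 1) *
    ((Nat.choose (m + k) (2 * k) + Nat.choose (m + k - 1) (2 * k) : ℕ) : ℝ) * x ^ k

lemma choose_key (n k : ℕ) :
    Nat.choose (n + k + 4) (2 * k + 4) + Nat.choose (n + k + 3) (2 * k + 4)
      + (Nat.choose (n + k + 2) (2 * k + 4) + Nat.choose (n + k + 1) (2 * k + 4))
    = 2 * (Nat.choose (n + k + 3) (2 * k + 4) + Nat.choose (n + k + 2) (2 * k + 4))
      + (Nat.choose (n + k + 2) (2 * k + 2) + Nat.choose (n + k + 1) (2 * k + 2)) := by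
  set m := n + k with hm
  have p1 : Nat.choose (m + 4) (2 * k + 4)
      = Nat.choose (m + 3) (2 * k + 3) + Nat.choose (m + 3) (2 * k + 4) := by
    rw [show m + 4 = (m + 3) + 1 by ring, show 2 * k + 4 = (2 * k + 3) + 1 by ring,
      Nat.choose_succ_succ]
  have p2 : Nat.choose (m + 3) (2 * k + 3)
      = Nat.choose (m + 2) (2 * k + 2) + Nat.choose (m + 2) (2 * k + 3) := by
    rw [show m + 3 = (m + 2) + 1 by ring, show 2 * k + 3 = (2 * k + 2) + 1 by ring,
      Nat.choose_succ_succ]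
  have p3 : Nat.choose (m + 2) (2 * k + 3)
      = Nat.choose (m + 1) (2 * k + 2) + Nat.choose (m + 1) (2 * k + 3) := by
    rw [show m + 2 = (m + 1) + 1 by ring, show 2 * k + 3 = (2 * k + 2) + 1 by ring,
      Nat.choose_succ_succ]
  have p4 : Nat.choose (m + 2) (2 * k + 4)
      = Nat.choose (m + 1) (2 * k + 3) + Nat.choose (m + 1) (2 * k + 4) := by
    rw [show m + 2 = (m + 1) + 1 by ring, show 2 * k + 4 = (2 * k + 3) + 1 by ring,
      Nat.choose_succ_succ]
  omega

lemma ff_rec (x : ℝ) (n k : ℕ) :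
    ff x (n + 2) (k + 2)
      = 2 * ff x (n + 1) (k + 2) - x * ff x (n + 1) (k + 1) - ff x n (k + 2) := by
  unfold ff
  have e1 : k + 2 - 1 = k + 1 := by omega
  have e2 : k + 1 - 1 = k := by omega
  have e3 : n + 2 + (k + 2) = n + k + 4 := by omega
  have e4 : n + 2 + (k + 2) - 1 = n + k + 3 := by omega
  have e5 : n + 1 + (k + 2) = n + k + 3 := by omega
  have e6 : n + 1 + (k + 2) - 1 = n + k + 2 := by omega
  have e7 : n + (k + 2) = n + k + 2 := by omega
  have e8 : n + (k + 2) - 1 = n + k + 1 := by omega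
  have e9 : n + 1 + (k + 1) = n + k + 2 := by omega
  have e10 : n + 1 + (k + 1) - 1 = n + k + 1 := by omega
  have e11 : 2 * (k + 2) = 2 * k + 4 := by omega
  have e12 : 2 * (k + 1) = 2 * k + 2 := by omega
  rw [e1, e2, e3, e5, e7, e9, e11, e12]
  have f1 : n + k + 4 - 1 = n + k + 3 := by omega
  have f2 : n + k + 3 - 1 = n + k + 2 := by omega
  have f3 : n + k + 2 - 1 = n + k + 1 := by omega
  rw [f1, f2, f3]
  have h : ((Nat.choose (n + k + 4) (2 * k + 4) + Nat.choose (n + k + 3) (2 * k + 4)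
      + (Nat.choose (n + k + 2) (2 * k + 4) + Nat.choose (n + k + 1) (2 * k + 4)) : ℕ) : ℝ)
    = ((2 * (Nat.choose (n + k + 3) (2 * k + 4) + Nat.choose (n + k + 2) (2 * k + 4))
      + (Nat.choose (n + k + 2) (2 * k + 2) + Nat.choose (n + k + 1) (2 * k + 2)) : ℕ) : ℝ) := by
    exact_mod_cast choose_key n k
  push_cast at h ⊢
  have hp : (-1 : ℝ) ^ (k + 1) = -(-1 : ℝ) ^ k := by ring
  rw [hp]
  linear_combination (-(-1 : ℝ) ^ k * x ^ (k + 2)) * h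

lemma ff_zero (x : ℝ) (m j : ℕ) (h : m + 1 ≤ j) : ff x m j = 0 := by
  unfold ff
  have h1 : Nat.choose (m + j) (2 * j) = 0 := Nat.choose_eq_zero_of_lt (by omega)
  have h2 : Nat.choose (m + j - 1) (2 * j) = 0 := Nat.choose_eq_zero_of_lt (by omega)
  rw [h1, h2]
  norm_num

lemma succ_succ (i : ℕ) : i + 1 + 1 = i + 2 := rfl

lemma pas (m : ℕ) : Nat.choose (m + 1) 2 = m + Nat.choose m 2 := by
  rw [show (2 : ℕ) = 1 + 1 from rfl, Nat.choose_succ_succ m 1, Nat.choose_one_right]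

lemma trig_rec (θ a : ℝ) :
    4 * Real.sin (a + θ) ^ 2
      = (2 - 4 * Real.sin θ ^ 2) * (4 * Real.sin a ^ 2) - 4 * Real.sin (a - θ) ^ 2
        + 2 * (4 * Real.sin θ ^ 2) := by
  have ha := Real.sin_sq_add_cos_sq a
  have hθ := Real.sin_sq_add_cos_sq θ
  rw [Real.sin_add, Real.sin_sub]
  linear_combination (8 * Real.sin a ^ 2) * hθ + (8 * Real.sin θ ^ 2) * ha

lemma main_lemma (θ : ℝ) (n : ℕ) :
    (∑ k ∈ Finset.Icc 1 n, ff (4 * Real.sin θ ^ 2) n k = 4 * Real.sin (n * θ) ^ 2) ∧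
    (∑ k ∈ Finset.Icc 1 (n + 1), ff (4 * Real.sin θ ^ 2) (n + 1) k
      = 4 * Real.sin ((n + 1 : ℕ) * θ) ^ 2) := by
  induction n with
  | zero =>
    constructor
    · norm_num
    · norm_num [ff, Finset.Icc_self]
  | succ p ih =>
    refine ⟨ih.2, ?_⟩
    obtain ⟨IH1, IH2⟩ := ih
    set x := 4 * Real.sin θ ^ 2 with hx
    have r1 : ∀ m : ℕ, (∑ k ∈ Finset.Icc 1 m, ff x m k)
        = ∑ i ∈ Finset.range m, ff x m (i + 1) := by
      intro m
      rw [← Finset.Ico_add_one_right_eq_Icc, Finset.sum_Ico_eq_sum_range]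
      exact Finset.sum_congr rfl fun i _ => by rw [Nat.add_comm 1 i]
    rw [r1]
    rw [Finset.sum_range_succ']
    simp only [succ_succ, zero_add]
    have key : ∑ i ∈ Finset.range (p + 1), ff x (p + 2) (i + 2)
        = 2 * ∑ i ∈ Finset.range (p + 1), ff x (p + 1) (i + 2)
          - x * ∑ i ∈ Finset.range (p + 1), ff x (p + 1) (i + 1)
          - ∑ i ∈ Finset.range (p + 1), ff x p (i + 2) := by
      rw [Finset.mul_sum, Finset.mul_sum, ← Finset.sum_sub_distrib, ← Finset.sum_sub_distrib]
      exact Finset.sum_congr rfl fun i _ => ff_rec x p i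
    have s1 : ∑ i ∈ Finset.range (p + 1), ff x (p + 1) (i + 1)
        = 4 * Real.sin ((p + 1 : ℕ) * θ) ^ 2 := by
      rw [← r1 (p + 1)]; exact IH2
    have s2 : ∑ i ∈ Finset.range (p + 1), ff x (p + 1) (i + 2)
        = 4 * Real.sin ((p + 1 : ℕ) * θ) ^ 2 - ff x (p + 1) 1 := by
      have h1 := Finset.sum_range_succ' (fun i => ff x (p + 1) (i + 1)) (p + 1)
      simp only [succ_succ, zero_add] at h1
      have h2 := Finset.sum_range_succ (fun i => ff x (p + 1) (i + 1)) (p + 1)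
      simp only [succ_succ] at h2
      have h3 : ff x (p + 1) (p + 2) = 0 := ff_zero x (p + 1) (p + 2) (by omega)
      rw [h3] at h2
      linarith [s1]
    have s3 : ∑ i ∈ Finset.range (p + 1), ff x p (i + 2)
        = 4 * Real.sin ((p : ℕ) * θ) ^ 2 - ff x p 1 := by
      have h1 := Finset.sum_range_succ' (fun i => ff x p (i + 1)) (p + 1)
      simp only [succ_succ, zero_add] at h1
      have h2 := Finset.sum_range_succ (fun i => ff x p (i + 1)) (p + 1)
      simp only [succ_succ] at h2
      have h2b := Finset.sum_range_succ (fun i => ff x p (i + 1)) p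
      have z1 : ff x p (p + 1) = 0 := ff_zero x p (p + 1) (le_refl _)
      have z2 : ff x p (p + 2) = 0 := ff_zero x p (p + 2) (by omega)
      have hIH : ∑ i ∈ Finset.range p, ff x p (i + 1) = 4 * Real.sin ((p : ℕ) * θ) ^ 2 := by
        rw [← r1 p]; exact IH1
      rw [z2] at h2
      rw [z1] at h2b
      linarith
    have cnat : Nat.choose (p + 3) 2 + Nat.choose (p + 2) 2
        + (Nat.choose (p + 1) 2 + Nat.choose p 2)
        = 2 * (Nat.choose (p + 2) 2 + Nat.choose (p + 1) 2) + 2 := by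
      have q1 := pas p
      have q2 : Nat.choose (p + 2) 2 = (p + 1) + Nat.choose (p + 1) 2 := pas (p + 1)
      have q3 : Nat.choose (p + 3) 2 = (p + 2) + Nat.choose (p + 2) 2 := pas (p + 2)
      omega
    have bd : ff x (p + 2) 1 - 2 * ff x (p + 1) 1 + ff x p 1 = 2 * x := by
      simp only [ff, pow_one, Nat.add_sub_cancel, pow_zero, one_mul]
      have hc : ((Nat.choose (p + 3) 2 + Nat.choose (p + 2) 2
          + (Nat.choose (p + 1) 2 + Nat.choose p 2) : ℕ) : ℝ)
          = ((2 * (Nat.choose (p + 2) 2 + Nat.choose (p + 1) 2) + 2 : ℕ) : ℝ) := by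
        exact_mod_cast cnat
      push_cast at hc
      simp only [show p + 2 + 1 = p + 3 from rfl, show p + 1 + 1 = p + 2 from rfl]
      push_cast
      linear_combination x * hc
    have tg : 4 * Real.sin (((p + 2 : ℕ) : ℝ) * θ) ^ 2
        = (2 - x) * (4 * Real.sin ((p + 1 : ℕ) * θ) ^ 2)
          - 4 * Real.sin ((p : ℕ) * θ) ^ 2 + 2 * x := by
      have c1 : ((p + 2 : ℕ) : ℝ) * θ = ((p + 1 : ℕ) : ℝ) * θ + θ := by push_cast; ring
      have c2 : ((p : ℕ) : ℝ) * θ = ((p + 1 : ℕ) : ℝ) * θ - θ := by push_cast; ring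
      rw [c1, c2, hx]
      exact trig_rec θ (((p + 1 : ℕ) : ℝ) * θ)
    have ccast : ((p + 1 + 1 : ℕ) : ℝ) = ((p + 2 : ℕ) : ℝ) := by push_cast; ring
    rw [key, s2, s3, s1]
    rw [show ((p + 1 + 1 : ℕ) : ℝ) * θ = ((p + 2 : ℕ) : ℝ) * θ by rw [ccast], tg]
    linear_combination bd

theorem stmt_14 (n : ℕ) (hn : 1 ≤ n) (θ : ℝ) :
    ∑ k ∈ Finset.Icc 1 n,
        (-1 : ℝ) ^ (k - 1) *
          ((Nat.choose (n + k) (2 * k) + Nat.choose (n + k - 1) (2 * k) : ℕ) : ℝ) *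
          (4 * Real.sin θ ^ 2) ^ k =
      4 * Real.sin (n * θ) ^ 2 := by
  exact (main_lemma θ n).1
end

section
/- For every natural number n ≥ 1 and every real number x, one has ∑_{k=1}^{n} (Nat.choose (n+k) (2k) + Nat.choose (n+k-1) (2k)) · x^k = 2 · (Polynomial.Chebyshev.T ℝ n).eval ((x + 2)/2) - 2, where Polynomial.Chebyshev.T ℝ n is the n-th Chebyshev polynomial of the first kind. -/
def chA (n k : ℕ) : ℕ := Nat.choose (n + k) (2 * k) + Nat.choose (n + k - 1) (2 * k)

noncomputable def SA (n : ℕ) (x : ℝ) : ℝ :=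
  ∑ k ∈ Finset.Icc 1 n, (chA n k : ℝ) * x ^ k

lemma chA_zero (m : ℕ) : chA m 0 = 2 := by simp [chA]

lemma chA_eq_zero {n k : ℕ} (h : n < k) : chA n k = 0 := by
  unfold chA
  rw [Nat.choose_eq_zero_of_lt (by omega), Nat.choose_eq_zero_of_lt (by omega)]

lemma SA_eq (n N : ℕ) (h : n ≤ N) (x : ℝ) :
    SA n x = ∑ j ∈ Finset.range N, (chA n (j + 1) : ℝ) * x ^ (j + 1) := by
  unfold SA
  rw [← Finset.Ico_add_one_right_eq_Icc, Finset.sum_Ico_eq_sum_range]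
  norm_num
  rw [Finset.sum_subset (Finset.range_subset_range.2 h)]
  · apply Finset.sum_congr rfl
    intro j _; rw [add_comm 1 j]
  · intro j _ hj
    rw [Finset.mem_range, not_lt] at hj
    rw [add_comm 1 j, chA_eq_zero (by omega)]
    simp

lemma key_s16 (m r : ℕ) : (m + 2).choose (r + 2) + m.choose (r + 2)
    = 2 * (m + 1).choose (r + 2) + m.choose r := by
  have h1 : (m + 2).choose (r + 2) = (m + 1).choose (r + 1) + (m + 1).choose (r + 2) :=
    Nat.choose_succ_succ _ _
  have h2 : (m + 1).choose (r + 2) = m.choose (r + 1) + m.choose (r + 2) :=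
    Nat.choose_succ_succ _ _
  have h3 : (m + 1).choose (r + 1) = m.choose r + m.choose (r + 1) :=
    Nat.choose_succ_succ _ _
  omega

lemma keyc (n j : ℕ) :
    chA (n + 2) (j + 1) + chA n (j + 1) = 2 * chA (n + 1) (j + 1) + chA (n + 1) j := by
  have A := key_s16 (n + j + 1) (2 * j)
  have B := key_s16 (n + j) (2 * j)
  unfold chA
  have e1 : n + 2 + (j + 1) = n + j + 1 + 2 := by omega
  have e2 : n + 2 + (j + 1) - 1 = n + j + 2 := by omega
  have e3 : n + (j + 1) = n + j + 1 := by omega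
  have e4 : n + (j + 1) - 1 = n + j := by omega
  have e5 : n + 1 + (j + 1) = n + j + 2 := by omega
  have e6 : n + 1 + (j + 1) - 1 = n + j + 1 := by omega
  have e7 : n + 1 + j - 1 = n + j := by omega
  have e8 : 2 * (j + 1) = 2 * j + 2 := by omega
  have e10 : n + 1 + j = n + j + 1 := by omega
  rw [e2, e4, e6, e7, e1, e3, e5, e8, e10]
  rw [show n + j + 1 + 1 = n + j + 2 from by omega] at A
  omega

lemma SA_rec (n : ℕ) (x : ℝ) :
    SA (n + 2) x = (x + 2) * SA (n + 1) x - SA n x + 2 * x := by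
  have h2 := SA_eq (n + 2) (n + 2) le_rfl x
  have h1 := SA_eq (n + 1) (n + 2) (by omega) x
  have h1' := SA_eq (n + 1) (n + 1) le_rfl x
  have h0 := SA_eq n (n + 2) (by omega) x
  have hsum : SA (n + 2) x + SA n x
      = 2 * SA (n + 1) x + (x * SA (n + 1) x + 2 * x) := by
    rw [h2, h0, ← Finset.sum_add_distrib]
    have hc : ∀ j ∈ Finset.range (n + 2),
        (chA (n + 2) (j + 1) : ℝ) * x ^ (j + 1) + (chA n (j + 1) : ℝ) * x ^ (j + 1)
          = 2 * ((chA (n + 1) (j + 1) : ℝ) * x ^ (j + 1))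
            + (chA (n + 1) j : ℝ) * x ^ (j + 1) := by
      intro j _
      have hk : ((chA (n + 2) (j + 1) + chA n (j + 1) : ℕ) : ℝ)
          = ((2 * chA (n + 1) (j + 1) + chA (n + 1) j : ℕ) : ℝ) := by
        rw [keyc]
      push_cast at hk
      linear_combination hk * x ^ (j + 1)
    rw [Finset.sum_congr rfl hc, Finset.sum_add_distrib, ← Finset.mul_sum, ← h1]
    congr 1
    have : (∑ j ∈ Finset.range (n + 1 + 1), (chA (n + 1) j : ℝ) * x ^ (j + 1))
        = ∑ j ∈ Finset.range (n + 1), (chA (n + 1) (j + 1) : ℝ) * x ^ (j + 1 + 1)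
          + (chA (n + 1) 0 : ℝ) * x ^ (0 + 1) :=
      Finset.sum_range_succ' _ _
    rw [this, chA_zero]
    have hx : ∀ j ∈ Finset.range (n + 1),
        (chA (n + 1) (j + 1) : ℝ) * x ^ (j + 1 + 1)
          = x * ((chA (n + 1) (j + 1) : ℝ) * x ^ (j + 1)) := by
      intro j _; ring
    rw [Finset.sum_congr rfl hx, ← Finset.mul_sum, ← h1']
    push_cast
    ring
  linarith

lemma g_rec (n : ℕ) (x : ℝ) :
    2 * (Polynomial.Chebyshev.T ℝ (n + 2 : ℕ)).eval ((x + 2) / 2) - 2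
      = (x + 2) * (2 * (Polynomial.Chebyshev.T ℝ (n + 1 : ℕ)).eval ((x + 2) / 2) - 2)
        - (2 * (Polynomial.Chebyshev.T ℝ n).eval ((x + 2) / 2) - 2) + 2 * x := by
  have h := Polynomial.Chebyshev.T_add_two ℝ (n : ℤ)
  have e2 : ((n + 2 : ℕ) : ℤ) = (n : ℤ) + 2 := by push_cast; ring
  have e1 : ((n + 1 : ℕ) : ℤ) = (n : ℤ) + 1 := by push_cast; ring
  rw [e2, e1, h]
  simp [Polynomial.eval_mul, Polynomial.eval_sub]
  ring

lemma main_ind (x : ℝ) : ∀ n : ℕ,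
    SA (n + 1) x = 2 * (Polynomial.Chebyshev.T ℝ (n + 1 : ℕ)).eval ((x + 2) / 2) - 2
    ∧ SA (n + 2) x = 2 * (Polynomial.Chebyshev.T ℝ (n + 2 : ℕ)).eval ((x + 2) / 2) - 2 := by
  intro n
  induction n with
  | zero =>
    constructor
    · show SA 1 x = _
      rw [show ((0 + 1 : ℕ) : ℤ) = 1 by norm_num, Polynomial.Chebyshev.T_one]
      simp [SA, chA]
      ring
    · show SA 2 x = _
      rw [show ((0 + 2 : ℕ) : ℤ) = 2 by norm_num, Polynomial.Chebyshev.T_two]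
      rw [show (2 : ℕ) = 1 + 1 from rfl, SA]
      rw [show Finset.Icc 1 (1 + 1) = {1, 2} from rfl]
      simp [chA]
      norm_num
      ring
  | succ m ih =>
    obtain ⟨ih1, ih2⟩ := ih
    refine ⟨ih2, ?_⟩
    have := SA_rec (m + 1) x
    rw [show m + 1 + 2 = m + 3 from rfl] at this
    rw [show m + 1 + 2 = m + 3 from rfl]
    rw [this, ih1, ih2]
    have := g_rec (m + 1) x
    rw [show m + 1 + 2 = m + 3 from rfl, show m + 1 + 1 = m + 2 from rfl] at this
    linarith

theorem stmt_16 (n : ℕ) (hn : 1 ≤ n) (x : ℝ) :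
    ∑ k ∈ Finset.Icc 1 n,
        ((Nat.choose (n + k) (2 * k) + Nat.choose (n + k - 1) (2 * k) : ℕ) : ℝ) * x ^ k =
      2 * (Polynomial.Chebyshev.T ℝ n).eval ((x + 2) / 2) - 2 := by
  obtain ⟨m, rfl⟩ := Nat.exists_eq_add_of_le hn
  have := (main_ind x m).1
  rw [show m + 1 = 1 + m by ring] at this
  exact this
end

section
/- For every natural number n ≥ 1 and every real number x with x ≥ 4, one has 2 - L n (2 - x) (-1) = (-1)^(n-1) · x · (F n (Real.sqrt (x - 4)) 1)^2. -/
lemma F_rec (n : ℕ) (y : ℝ) : F (n+2) y 1 = y * F (n+1) y 1 + 1 * F n y 1 := by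
  simp [F]

lemma L_rec (n : ℕ) (z : ℝ) : L (n+2) z (-1) = z * L (n+1) z (-1) + (-1) * L n z (-1) := by
  simp [L]

lemma cassini (y : ℝ) : ∀ n : ℕ, F (n+2) y 1 * F n y 1 - F (n+1) y 1 ^ 2 = (-1:ℝ)^(n+1)
  | 0 => by simp [F]
  | n+1 => by
    have h := cassini y n
    have e3 := F_rec (n+1) y
    have e2 := F_rec n y
    rw [show n+1+2 = n+3 from rfl] at e3
    rw [e2] at h
    rw [e3, show n+1+1=n+2 from rfl, e2]
    linear_combination -h

lemma aux (x : ℝ) (y : ℝ) (hy : y ^ 2 = x - 4) :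
    ∀ n : ℕ, 2 - L (n+1) (2-x) (-1) = (-1:ℝ)^n * x * (F (n+1) y 1) ^ 2 := by
  intro n
  induction n using Nat.twoStepInduction with
  | zero => simp [L, F]
  | one =>
    have := L_rec 0 (2-x)
    simp [L, F] at *
    nlinarith [hy]
  | more n ih1 ih2 =>
    have hL := L_rec (n+1) (2-x)
    have hF := F_rec (n+1) y
    have hc := cassini y (n+1)
    have hF2 := F_rec n y
    rw [show n+1+2 = n+3 from rfl] at hL hF
    rw [show n+2+1 = n+3 from rfl, hL, hF]
    rw [show n+1+1 = n+2 from rfl] at ih2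
    rw [hF] at hc
    have hp : ((-1:ℝ)^n)^2 = 1 := by
      rw [← pow_mul, mul_comm, pow_mul]; simp
    linear_combination (2-x)*ih2 - ih1 - (-1:ℝ)^n*x*(F (n+1+1) y 1)^2*hy
      - 2*(-1:ℝ)^n*x*hc - 2*x*hp

theorem stmt_18 (n : ℕ) (hn : 1 ≤ n) (x : ℝ) (hx : x ≥ 4) :
    2 - L n (2 - x) (-1) = (-1 : ℝ) ^ (n - 1) * x * (F n (Real.sqrt (x - 4)) 1) ^ 2 := by
  obtain ⟨m, rfl⟩ := Nat.exists_eq_add_of_le hn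
  have hy : (Real.sqrt (x - 4)) ^ 2 = x - 4 := Real.sq_sqrt (by linarith)
  have := aux x (Real.sqrt (x-4)) hy m
  simpa [add_comm] using this
end
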